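/- arXiv:1201.2976 — 2 statements merged into one kernel-verified Lean document; each statement's English description precedes it below -/
import Mathlib

section
/- Let n ≥ 1, let Ω ⊆ ℝⁿ be open, let A : Ω → (n×n symmetric real matrices) be a smooth uniformly elliptic matrix field (c|ξ|² ≤ ⟨A(x)ξ, ξ⟩ ≤ C|ξ|² for some 0 < c ≤ C), and let E be a strictly positive C² function on Ω with f(x) := −div(A(x)∇E(x)) ≥ 0 on Ω. Then for every u ∈ C∞c(Ω), ∫_Ω ⟨A(x)∇u, ∇u⟩ dx ≥ (1/4) ∫_Ω ( ⟨A(x)∇E, ∇E⟩ / E² ) u² dx + (1/2) ∫_Ω ( u² / E ) f(x) dx. -/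
open MeasureTheory Set

/-- The `i`-th partial derivative of a real function on `ℝⁿ`. -/
noncomputable def pderiv' {n : ℕ} (i : Fin n) (f : EuclideanSpace ℝ (Fin n) → ℝ)
    (x : EuclideanSpace ℝ (Fin n)) : ℝ :=
  fderiv ℝ f x (EuclideanSpace.single i 1)

/-- The quadratic form `⟨A(x)ξ, η⟩ = Σᵢⱼ Aᵢⱼ(x) ξⱼ ηᵢ` associated to a matrix field. -/
def quadForm {n : ℕ} (A : EuclideanSpace ℝ (Fin n) → Matrix (Fin n) (Fin n) ℝ)
    (x : EuclideanSpace ℝ (Fin n)) (ξ η : Fin n → ℝ) : ℝ :=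
  ∑ i : Fin n, ∑ j : Fin n, A x i j * ξ j * η i

/-- The divergence `div(A∇E) = Σᵢ ∂ᵢ(Σⱼ Aᵢⱼ ∂ⱼE)` of the vector field `A∇E`. -/
noncomputable def divAgrad {n : ℕ} (A : EuclideanSpace ℝ (Fin n) → Matrix (Fin n) (Fin n) ℝ)
    (E : EuclideanSpace ℝ (Fin n) → ℝ) (x : EuclideanSpace ℝ (Fin n)) : ℝ :=
  ∑ i : Fin n, pderiv' i (fun y => ∑ j : Fin n, A y i j * pderiv' j E y) x

theorem abs_coord_le_norm' {m : ℕ} (x : EuclideanSpace ℝ (Fin m)) (i : Fin m) :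
    |x i| ≤ ‖x‖ := by
  rw [EuclideanSpace.norm_eq]
  rw [← Real.sqrt_sq_eq_abs]
  apply Real.sqrt_le_sqrt
  have := Finset.single_le_sum (f := fun j => ‖x j‖^2) (fun j _ => sq_nonneg _)
    (Finset.mem_univ i)
  simpa [Real.norm_eq_abs, sq_abs] using this

/-- Divergence theorem for compactly supported C¹ vector fields on Euclidean space. -/
theorem integral_div_eq_zero' {m : ℕ}
    (W : EuclideanSpace ℝ (Fin (m+1)) → Fin (m+1) → ℝ)
    (W' : EuclideanSpace ℝ (Fin (m+1)) → Fin (m+1) → (EuclideanSpace ℝ (Fin (m+1)) →L[ℝ] ℝ))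
    (hW : ∀ x i, HasFDerivAt (fun y => W y i) (W' x i) x)
    (hcont : Continuous fun x => ∑ i, W' x i (EuclideanSpace.single i 1))
    (K : Set (EuclideanSpace ℝ (Fin (m+1)))) (hK : IsCompact K)
    (hWK : ∀ x ∉ K, ∀ i, W x i = 0) (hW'K : ∀ x ∉ K, ∀ i, W' x i = 0) :
    ∫ x, ∑ i, W' x i (EuclideanSpace.single i 1) = 0 := by
  classical
  set eqv : EuclideanSpace ℝ (Fin (m+1)) ≃L[ℝ] (Fin (m+1) → ℝ) :=
    PiLp.continuousLinearEquiv 2 ℝ (fun _ : Fin (m+1) => ℝ) with heqv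
  obtain ⟨R, hR0, hRK⟩ : ∃ R : ℝ, 0 ≤ R ∧ K ⊆ Metric.closedBall 0 R := by
    obtain ⟨R, hR⟩ := hK.isBounded.subset_closedBall 0
    exact ⟨max R 0, le_max_right _ _, hR.trans (Metric.closedBall_subset_closedBall (le_max_left _ _))⟩
  set a : Fin (m+1) → ℝ := fun _ => -(R+1) with ha
  set b : Fin (m+1) → ℝ := fun _ => (R+1) with hb
  have hle : a ≤ b := fun i => by simp [ha, hb]; linarith
  set D : EuclideanSpace ℝ (Fin (m+1)) → ℝ := fun x => ∑ i, W' x i (EuclideanSpace.single i 1)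
    with hD
  -- points with some coordinate of abs value R+1 are not in K
  have hout : ∀ z : EuclideanSpace ℝ (Fin (m+1)), ∀ i, R < |z i| → z ∉ K := by
    intro z i hzi hzK
    have := hRK hzK
    simp only [Metric.mem_closedBall, dist_zero_right] at this
    have h2 := abs_coord_le_norm' z i
    linarith
  have hsingle : ∀ i : Fin (m+1),
      (eqv.symm (Pi.single i 1) : EuclideanSpace ℝ (Fin (m+1))) = EuclideanSpace.single i 1 := by
    intro i; rfl
  have key := MeasureTheory.integral_divergence_of_hasFDerivAt_off_countable' a b hle
    (fun i y => W (eqv.symm y) i)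
    (fun i y => (W' (eqv.symm y) i).comp (eqv.symm : (Fin (m+1) → ℝ) →L[ℝ] _))
    ∅ countable_empty
    (fun i => ((Differentiable.continuous (fun x => (hW x i).differentiableAt)).comp
      eqv.symm.continuous).continuousOn)
    (fun x _ i => (hW (eqv.symm x) i).comp x eqv.symm.hasFDerivAt)
    (by
      have : Continuous fun y : Fin (m+1) → ℝ => D (eqv.symm y) :=
        hcont.comp eqv.symm.continuous
      refine (this.continuousOn).integrableOn_compact isCompact_Icc |>.congr_fun ?_
        measurableSet_Icc
      intro y _
      simp only [ContinuousLinearMap.comp_apply, hD]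
      congr 1)
  -- all face integrals vanish
  have hface : ∀ (i : Fin (m+1)) (c : ℝ), |c| = R+1 →
      (∫ x in Icc (a ∘ i.succAbove) (b ∘ i.succAbove), W (eqv.symm (i.insertNth c x)) i) = 0 := by
    intro i c hc
    refine integral_eq_zero_of_ae (Filter.Eventually.of_forall fun y => ?_)
    have hid : ∀ v : Fin (m+1) → ℝ, (eqv.symm v : EuclideanSpace ℝ (Fin (m+1))) i = v i :=
      fun v => rfl
    have hz : (eqv.symm (i.insertNth c y) : EuclideanSpace ℝ (Fin (m+1))) i = c := by
      rw [hid, Fin.insertNth_apply_same]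
    exact hWK _ (hout _ i (by rw [hz, hc]; linarith)) i
  have hsum0 : ∑ i : Fin (m+1),
      ((∫ x in Icc (a ∘ i.succAbove) (b ∘ i.succAbove), W (eqv.symm (i.insertNth (b i) x)) i) -
       ∫ x in Icc (a ∘ i.succAbove) (b ∘ i.succAbove), W (eqv.symm (i.insertNth (a i) x)) i) = 0 := by
    refine Finset.sum_eq_zero fun i _ => ?_
    rw [hface i (b i) (by show |(R+1)| = R+1; rw [abs_of_nonneg (by linarith)]),
      hface i (a i) (by show |(-(R+1))| = R+1; rw [abs_neg, abs_of_nonneg (by linarith)]),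
      sub_zero]
  have hIcc0 : (∫ y in Icc a b, D (eqv.symm y)) = 0 := by
    rw [← hsum0, ← key]
    refine setIntegral_congr_fun measurableSet_Icc fun y _ => ?_
    simp only [ContinuousLinearMap.comp_apply, hD]
    congr 1
  have hvanish : ∀ y : Fin (m+1) → ℝ, y ∉ Icc a b → D (eqv.symm y) = 0 := by
    intro y hy
    have : ∃ i, R < |y i| := by
      by_contra hcon
      push_neg at hcon
      exact hy ⟨fun i => by have := (abs_le.1 (hcon i)).1; simp [ha]; linarith,
                fun i => by have := (abs_le.1 (hcon i)).2; simp [hb]; linarith⟩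
    obtain ⟨i, hi⟩ := this
    have hz : (eqv.symm y : EuclideanSpace ℝ (Fin (m+1))) i = y i := rfl
    have hnotK : (eqv.symm y : EuclideanSpace ℝ (Fin (m+1))) ∉ K := hout _ i (by rw [hz]; exact hi)
    simp only [hD]
    exact Finset.sum_eq_zero fun j _ => by rw [hW'K _ hnotK j]; rfl
  have hall : (∫ y : Fin (m+1) → ℝ, D (eqv.symm y)) = 0 := by
    rw [← setIntegral_eq_integral_of_forall_compl_eq_zero hvanish, hIcc0]
  have htrans : (∫ x, D x) = ∫ y : Fin (m+1) → ℝ, D (eqv.symm y) := by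
    exact ((MeasurePreserving.symm _
      (EuclideanSpace.volume_preserving_symm_measurableEquiv_toLp (ι := Fin (m+1)))).integral_comp'
      (f := MeasurableEquiv.toLp 2 (Fin (m+1) → ℝ)) D).symm
  rw [hD] at htrans hall ⊢
  rw [htrans, hall]

/-- Expansion of the quadratic form on a difference. -/
theorem quadForm_sub {n : ℕ} (A : EuclideanSpace ℝ (Fin n) → Matrix (Fin n) (Fin n) ℝ)
    (x : EuclideanSpace ℝ (Fin n)) (ξ η : Fin n → ℝ) (t : ℝ) :
    quadForm A x (fun j => ξ j - t * η j) (fun j => ξ j - t * η j)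
      = quadForm A x ξ ξ - t * quadForm A x η ξ - t * quadForm A x ξ η
        + t^2 * quadForm A x η η := by
  simp only [quadForm, Finset.mul_sum, ← Finset.sum_sub_distrib, ← Finset.sum_add_distrib]
  refine Finset.sum_congr rfl fun i _ => ?_
  refine Finset.sum_congr rfl fun j _ => ?_
  ring

theorem quadForm_symm {n : ℕ} {A : EuclideanSpace ℝ (Fin n) → Matrix (Fin n) (Fin n) ℝ}
    {x : EuclideanSpace ℝ (Fin n)} (hs : (A x).IsSymm) (ξ η : Fin n → ℝ) :
    quadForm A x ξ η = quadForm A x η ξ := by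
  unfold quadForm
  rw [Finset.sum_comm]
  refine Finset.sum_congr rfl fun i _ => Finset.sum_congr rfl fun j _ => ?_
  rw [hs.apply j i]
  ring

set_option maxHeartbeats 2000000 in
/-- **Improved general Hardy inequality for uniformly elliptic operators.** Let
`Ω ⊆ ℝⁿ` be open, `A` a smooth symmetric uniformly elliptic matrix field on `Ω`, `E > 0`
a `C²` function on `Ω` with `f := -div(A∇E) ≥ 0` on `Ω`. Then for every `u ∈ C∞c(Ω)`,
`∫_Ω |∇u|²_A ≥ (1/4) ∫_Ω (|∇E|²_A / E²) u² + (1/2) ∫_Ω (u²/E) f`. -/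
theorem general_hardy_elliptic_improved (n : ℕ) (hn : 1 ≤ n)
    (Ω : Set (EuclideanSpace ℝ (Fin n))) (hΩ : IsOpen Ω)
    (A : EuclideanSpace ℝ (Fin n) → Matrix (Fin n) (Fin n) ℝ)
    (hA_smooth : ∀ i j : Fin n, ContDiff ℝ (⊤ : ℕ∞) (fun x => A x i j))
    (hA_symm : ∀ x ∈ Ω, (A x).IsSymm)
    (c C : ℝ) (hc : 0 < c) (hcC : c ≤ C)
    (hA_ell : ∀ x ∈ Ω, ∀ ξ : Fin n → ℝ,
      c * (∑ i, (ξ i) ^ 2) ≤ quadForm A x ξ ξ ∧ quadForm A x ξ ξ ≤ C * (∑ i, (ξ i) ^ 2))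
    (E : EuclideanSpace ℝ (Fin n) → ℝ) (hE_C2 : ContDiffOn ℝ 2 E Ω)
    (hE_pos : ∀ x ∈ Ω, 0 < E x)
    (f : EuclideanSpace ℝ (Fin n) → ℝ) (hf : ∀ x ∈ Ω, f x = -divAgrad A E x)
    (hf_nonneg : ∀ x ∈ Ω, 0 ≤ f x)
    (u : EuclideanSpace ℝ (Fin n) → ℝ) (hu : ContDiff ℝ (⊤ : ℕ∞) u)
    (hu_supp : HasCompactSupport u) (hu_sub : tsupport u ⊆ Ω) :
    (1 / 4) * (∫ x in Ω,
        quadForm A x (fun j => pderiv' j E x) (fun j => pderiv' j E x) / (E x) ^ 2 *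
          (u x) ^ 2) +
      (1 / 2) * (∫ x in Ω, (u x) ^ 2 / E x * f x) ≤
      ∫ x in Ω, quadForm A x (fun j => pderiv' j u x) (fun j => pderiv' j u x) := by
  classical
  set K : Set (EuclideanSpace ℝ (Fin n)) := tsupport u with hK
  have hKc : IsCompact K := hu_supp
  -- vanishing of u and its derivatives off K
  have hu0 : ∀ x ∉ K, u x = 0 := fun x hx => image_eq_zero_of_notMem_tsupport hx
  have hDu0 : ∀ x ∉ K, ∀ j, pderiv' j u x = 0 := by
    intro x hx j
    have h0 : fderiv ℝ u x = 0 := by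
      by_contra h
      exact hx (support_fderiv_subset (𝕜 := ℝ) (Function.mem_support.2 h))
    simp [pderiv', h0]
  -- regularity of the partial derivatives of u
  have hDu_smooth : ∀ j, Continuous (fun x => pderiv' j u x) := by
    intro j
    have h1 : ContDiff ℝ (⊤ : ℕ∞) (fderiv ℝ u) := hu.fderiv_right (le_of_eq (by simp))
    exact h1.continuous.clm_apply continuous_const
  -- regularity of partial derivatives of E on Ω
  have hDE_C1 : ∀ j, ContDiffOn ℝ 1 (fun x => pderiv' j E x) Ω := by
    intro j
    exact (hE_C2.fderiv_of_isOpen hΩ (by norm_num)).clm_apply contDiffOn_const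
  -- the vector field components
  set V : Fin n → EuclideanSpace ℝ (Fin n) → ℝ :=
    fun i y => ∑ j : Fin n, A y i j * pderiv' j E y with hV
  have hV_C1 : ∀ i, ContDiffOn ℝ 1 (V i) Ω := by
    intro i
    exact ContDiffOn.sum fun j _ =>
      ((hA_smooth i j).of_le (by simp)).contDiffOn.mul (hDE_C1 j)
  set g : EuclideanSpace ℝ (Fin n) → ℝ := fun y => u y ^ 2 / E y with hg
  have hg_C1 : ContDiffOn ℝ 1 g Ω := by
    refine ContDiffOn.div ?_ (hE_C2.of_le one_le_two) (fun x hx => (hE_pos x hx).ne')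
    exact ((hu.of_le (by simp)).pow 2).contDiffOn
  set W : EuclideanSpace ℝ (Fin n) → Fin n → ℝ := fun y i => g y * V i y with hW
  set W' : EuclideanSpace ℝ (Fin n) → Fin n → (EuclideanSpace ℝ (Fin n) →L[ℝ] ℝ) :=
    fun x i => fderiv ℝ (fun y => W y i) x with hW'
  have hg0 : ∀ x ∉ K, g x = 0 := fun x hx => by simp [hg, hu0 x hx]
  have hW0 : ∀ x ∉ K, ∀ i, W x i = 0 := fun x hx i => by simp [hW, hg0 x hx]
  have hKopen : IsOpen Kᶜ := (isClosed_tsupport u).isOpen_compl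
  have hWzero_nhds : ∀ x ∉ K, ∀ i, (fun y => W y i) =ᶠ[nhds x] (fun _ => (0:ℝ)) := by
    intro x hx i
    exact Filter.eventuallyEq_of_mem (hKopen.mem_nhds hx) (fun y hy => hW0 y hy i)
  have hWdΩ : ∀ x ∈ Ω, ∀ i, DifferentiableAt ℝ (fun y => W y i) x := by
    intro x hx i
    exact ((hg_C1.differentiableOn one_ne_zero).differentiableAt (hΩ.mem_nhds hx)).mul
      (((hV_C1 i).differentiableOn one_ne_zero).differentiableAt (hΩ.mem_nhds hx))
  have hWd : ∀ (x) (i : Fin n), DifferentiableAt ℝ (fun y => W y i) x := by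
    intro x i
    by_cases hx : x ∈ Ω
    · exact hWdΩ x hx i
    · have hxK : x ∉ K := fun h => hx (hu_sub h)
      exact (differentiableAt_const (0:ℝ)).congr_of_eventuallyEq (hWzero_nhds x hxK i)
  have hWhas : ∀ (x) (i : Fin n), HasFDerivAt (fun y => W y i) (W' x i) x :=
    fun x i => (hWd x i).hasFDerivAt
  have hW'0 : ∀ x ∉ K, ∀ i, W' x i = 0 := by
    intro x hx i
    show fderiv ℝ (fun y => W y i) x = 0
    rw [Filter.EventuallyEq.fderiv_eq (hWzero_nhds x hx i)]
    exact fderiv_const_apply 0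
  -- the divergence function
  set D : EuclideanSpace ℝ (Fin n) → ℝ :=
    fun x => ∑ i, W' x i (EuclideanSpace.single i 1) with hD
  have hD0 : ∀ x ∉ K, D x = 0 := by
    intro x hx
    simp only [hD]
    exact Finset.sum_eq_zero fun i _ => by rw [hW'0 x hx i]; rfl
  have hDcontΩ : ContinuousOn D Ω := by
    apply continuousOn_finset_sum
    intro i _
    refine ContinuousOn.clm_apply ?_ continuousOn_const
    exact ((hg_C1.mul (hV_C1 i)).continuousOn_fderiv_of_isOpen hΩ le_rfl)
  have hDcont : Continuous D := by
    rw [continuous_iff_continuousAt]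
    intro x
    by_cases hx : x ∈ Ω
    · exact hDcontΩ.continuousAt (hΩ.mem_nhds hx)
    · have hxK : x ∉ K := fun h => hx (hu_sub h)
      have : D =ᶠ[nhds x] (fun _ => (0:ℝ)) :=
        Filter.eventuallyEq_of_mem (hKopen.mem_nhds hxK) (fun y hy => hD0 y hy)
      exact continuousAt_const.congr this.symm
  -- pointwise divergence identity on Ω
  have hdiv : ∀ x ∈ Ω, D x =
      2 * (u x / E x * quadForm A x (fun j => pderiv' j E x) (fun j => pderiv' j u x))
      - quadForm A x (fun j => pderiv' j E x) (fun j => pderiv' j E x) / (E x)^2 * (u x)^2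
      - (u x)^2 / E x * f x := by
    intro x hx
    have hEx : (0:ℝ) < E x := hE_pos x hx
    have hEne : E x ≠ 0 := hEx.ne'
    have hud : HasFDerivAt u (fderiv ℝ u x) x := (hu.differentiable (by simp) x).hasFDerivAt
    have hEd : DifferentiableAt ℝ E x :=
      (hE_C2.differentiableOn two_ne_zero).differentiableAt (hΩ.mem_nhds hx)
    have hu2 : HasFDerivAt (fun y => u y ^ 2)
        (u x • fderiv ℝ u x + u x • fderiv ℝ u x) x :=
      (hud.mul hud).congr_of_eventuallyEq (Filter.Eventually.of_forall fun y => by rw [Pi.mul_apply]; ring)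
    have hinv : HasFDerivAt (fun y => (E y)⁻¹) ((-(E x ^ 2)⁻¹) • fderiv ℝ E x) x :=
      (hasDerivAt_inv hEne).comp_hasFDerivAt x hEd.hasFDerivAt
    set Dg : EuclideanSpace ℝ (Fin n) →L[ℝ] ℝ :=
      (u x ^ 2) • ((-(E x ^ 2)⁻¹) • fderiv ℝ E x)
        + (E x)⁻¹ • (u x • fderiv ℝ u x + u x • fderiv ℝ u x) with hDg
    have hgd : HasFDerivAt g Dg x :=
      (hu2.mul hinv).congr_of_eventuallyEq
        (Filter.Eventually.of_forall fun y => div_eq_mul_inv _ _)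
    have hVd : ∀ i, HasFDerivAt (V i) (fderiv ℝ (V i) x) x := fun i =>
      (((hV_C1 i).differentiableOn one_ne_zero).differentiableAt (hΩ.mem_nhds hx)).hasFDerivAt
    have hWfd : ∀ i, HasFDerivAt (fun y => W y i)
        (g x • fderiv ℝ (V i) x + V i x • Dg) x := fun i => hgd.mul (hVd i)
    have hW'eq : ∀ i, W' x i = g x • fderiv ℝ (V i) x + V i x • Dg := fun i =>
      (hWfd i).fderiv
    set Gi : Fin n → ℝ := fun i =>
      u x ^ 2 * (-(E x ^ 2)⁻¹ * pderiv' i E x)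
        + (E x)⁻¹ * (u x * pderiv' i u x + u x * pderiv' i u x) with hGi
    have hDgapp : ∀ i, Dg (EuclideanSpace.single i 1) = Gi i := by
      intro i
      simp only [hDg, hGi, ContinuousLinearMap.add_apply, ContinuousLinearMap.smul_apply,
        smul_eq_mul, pderiv']
    have hstep1 : D x = ∑ i, (g x * pderiv' i (V i) x + V i x * Gi i) := by
      simp only [hD]
      refine Finset.sum_congr rfl fun i _ => ?_
      rw [hW'eq i]
      rw [ContinuousLinearMap.add_apply, ContinuousLinearMap.smul_apply,
        ContinuousLinearMap.smul_apply, hDgapp i, smul_eq_mul, smul_eq_mul]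
      rfl
    have hdivA : divAgrad A E x = -f x := by rw [hf x hx]; ring
    have hstep2 : ∑ i, (g x * pderiv' i (V i) x + V i x * Gi i)
        = g x * divAgrad A E x + ∑ i, V i x * Gi i := by
      rw [Finset.sum_add_distrib, ← Finset.mul_sum]
      rfl
    have hsum : ∑ i, V i x * Gi i =
        2 * (u x / E x * quadForm A x (fun j => pderiv' j E x) (fun j => pderiv' j u x))
        - quadForm A x (fun j => pderiv' j E x) (fun j => pderiv' j E x) / (E x)^2 * (u x)^2 := by
      simp only [hV, hGi, quadForm, Finset.mul_sum, Finset.sum_div, Finset.sum_mul,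
        ← Finset.sum_sub_distrib]
      refine Finset.sum_congr rfl fun i _ => ?_
      refine Finset.sum_congr rfl fun j _ => ?_
      field_simp
      ring
    rw [hstep1, hstep2, hsum, hdivA]
    have hgx : g x = u x ^ 2 / E x := rfl
    rw [hgx]
    ring
  -- the four integrands
  set φP : EuclideanSpace ℝ (Fin n) → ℝ :=
    fun x => quadForm A x (fun j => pderiv' j u x) (fun j => pderiv' j u x) with hφP
  set φX : EuclideanSpace ℝ (Fin n) → ℝ :=
    fun x => quadForm A x (fun j => pderiv' j E x) (fun j => pderiv' j E x) / (E x) ^ 2 *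
      (u x) ^ 2 with hφX
  set φF : EuclideanSpace ℝ (Fin n) → ℝ := fun x => (u x) ^ 2 / E x * f x with hφF
  set φM : EuclideanSpace ℝ (Fin n) → ℝ :=
    fun x => u x / E x * quadForm A x (fun j => pderiv' j E x) (fun j => pderiv' j u x) with hφM
  -- integrability helper
  have hint : ∀ h : EuclideanSpace ℝ (Fin n) → ℝ, ContinuousOn h Ω → (∀ x ∉ K, h x = 0) →
      IntegrableOn h Ω := by
    intro h hhc hhz
    have h1 : IntegrableOn h K := (hhc.mono hu_sub).integrableOn_compact hKc
    have h2 : IntegrableOn h (Ω \ K) := by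
      refine (integrableOn_zero).congr_fun (fun x hx => (hhz x hx.2).symm)
        (hΩ.measurableSet.diff (isClosed_tsupport u).measurableSet)
    refine (h1.union h2).mono_set ?_
    intro x hx
    by_cases hxK : x ∈ K
    · exact mem_union_left _ hxK
    · exact mem_union_right _ ⟨hx, hxK⟩
  -- continuity facts
  have hAcont : ∀ i j, Continuous fun x => A x i j := fun i j => (hA_smooth i j).continuous
  have hDEcont : ∀ j, ContinuousOn (fun x => pderiv' j E x) Ω := fun j => (hDE_C1 j).continuousOn
  have hEcont : ContinuousOn E Ω := hE_C2.continuousOn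
  have hucont : Continuous u := hu.continuous
  have hEne : ∀ x ∈ Ω, E x ≠ 0 := fun x hx => (hE_pos x hx).ne'
  have hfcont : ContinuousOn f Ω := by
    have hdA : ContinuousOn (divAgrad A E) Ω := by
      show ContinuousOn (fun x => ∑ i : Fin n, pderiv' i (V i) x) Ω
      refine continuousOn_finset_sum _ fun i _ => ?_
      exact ((hV_C1 i).continuousOn_fderiv_of_isOpen hΩ le_rfl).clm_apply continuousOn_const
    exact ContinuousOn.congr hdA.neg (fun x hx => hf x hx)
  have hQEE : ContinuousOn
      (fun x => quadForm A x (fun j => pderiv' j E x) (fun j => pderiv' j E x)) Ω := by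
    refine continuousOn_finset_sum _ fun i _ => continuousOn_finset_sum _ fun j _ => ?_
    exact (((hAcont i j).continuousOn.mul (hDEcont j)).mul (hDEcont i))
  have hQEU : ContinuousOn
      (fun x => quadForm A x (fun j => pderiv' j E x) (fun j => pderiv' j u x)) Ω := by
    refine continuousOn_finset_sum _ fun i _ => continuousOn_finset_sum _ fun j _ => ?_
    exact (((hAcont i j).continuousOn.mul (hDEcont j)).mul (hDu_smooth i).continuousOn)
  have hintP : IntegrableOn φP Ω := by
    refine hint φP ?_ ?_
    · refine continuousOn_finset_sum _ fun i _ => continuousOn_finset_sum _ fun j _ => ?_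
      exact (((hAcont i j).continuousOn.mul (hDu_smooth j).continuousOn).mul
        (hDu_smooth i).continuousOn)
    · intro x hx
      simp [hφP, quadForm, hDu0 x hx]
  have hintX : IntegrableOn φX Ω := by
    refine hint φX ?_ ?_
    · exact (hQEE.div (hEcont.pow 2) (fun x hx => pow_ne_zero 2 (hEne x hx))).mul
        (hucont.pow 2).continuousOn
    · intro x hx
      simp [hφX, hu0 x hx]
  have hintF : IntegrableOn φF Ω := by
    refine hint φF ?_ ?_
    · exact ((hucont.pow 2).continuousOn.div hEcont hEne).mul hfcont
    · intro x hx
      simp [hφF, hu0 x hx]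
  have hintM : IntegrableOn φM Ω := by
    refine hint φM ?_ ?_
    · exact (hucont.continuousOn.div hEcont hEne).mul hQEU
    · intro x hx
      simp [hφM, hu0 x hx]
  -- the divergence theorem
  obtain ⟨m, rfl⟩ : ∃ m, n = m + 1 := ⟨n - 1, (Nat.succ_pred_eq_of_pos hn).symm⟩
  have hIzero : (∫ x, D x) = 0 := by
    refine integral_div_eq_zero' W W' (fun x i => hWhas x i) ?_ K hKc hW0 hW'0
    exact hD ▸ hDcont
  have hΩzero : (∫ x in Ω, D x) = 0 := by
    rw [setIntegral_eq_integral_of_forall_compl_eq_zero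
      (fun x hx => hD0 x (fun hkk => hx (hu_sub hkk)))]
    exact hIzero
  have hsplit : (∫ x in Ω, D x) =
      2 * (∫ x in Ω, φM x) - (∫ x in Ω, φX x) - ∫ x in Ω, φF x := by
    rw [setIntegral_congr_fun hΩ.measurableSet
      (fun x hx => (hdiv x hx : D x = 2 * φM x - φX x - φF x))]
    show (∫ x in Ω, (2 * φM x - φX x - φF x)) = _
    have h1 : IntegrableOn (fun x => 2 * φM x) Ω := hintM.const_mul 2
    have h2 : IntegrableOn (fun x => 2 * φM x - φX x) Ω := h1.sub hintX
    have e1 : (∫ x in Ω, (2 * φM x - φX x - φF x))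
        = (∫ x in Ω, (2 * φM x - φX x)) - ∫ x in Ω, φF x := integral_sub h2 hintF
    have e2 : (∫ x in Ω, (2 * φM x - φX x))
        = (∫ x in Ω, (2 * φM x)) - ∫ x in Ω, φX x := integral_sub h1 hintX
    have e3 : (∫ x in Ω, (2 * φM x)) = 2 * ∫ x in Ω, φM x := by
      simpa [smul_eq_mul] using integral_smul (μ := volume.restrict Ω) (2:ℝ) φM
    rw [e1, e2, e3]
  have hbal : 2 * (∫ x in Ω, φM x) - (∫ x in Ω, φX x) - (∫ x in Ω, φF x) = 0 := by
    rw [← hsplit]; exact hΩzero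
  -- pointwise inequality
  have hpt : ∀ x ∈ Ω, φM x - 1/4 * φX x ≤ φP x := by
    intro x hx
    have hEx := hE_pos x hx
    have hExne : E x ≠ 0 := hEx.ne'
    set t : ℝ := u x / (2 * E x) with ht
    have h0 : (0:ℝ) ≤ quadForm A x
        (fun j => pderiv' j u x - t * pderiv' j E x)
        (fun j => pderiv' j u x - t * pderiv' j E x) := by
      refine le_trans ?_ ((hA_ell x hx _).1)
      positivity
    rw [quadForm_sub] at h0
    have hsym : quadForm A x (fun j => pderiv' j u x) (fun j => pderiv' j E x)
        = quadForm A x (fun j => pderiv' j E x) (fun j => pderiv' j u x) :=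
      quadForm_symm (hA_symm x hx) _ _
    rw [hsym] at h0
    have e1 : φM x - 1/4 * φX x =
        2 * t * quadForm A x (fun j => pderiv' j E x) (fun j => pderiv' j u x)
        - t^2 * quadForm A x (fun j => pderiv' j E x) (fun j => pderiv' j E x) := by
      simp only [hφM, hφX, ht]
      field_simp
      ring
    rw [e1]
    simp only [hφP]
    linarith
  have hmono := setIntegral_mono_on (f := fun x => φM x - 1/4 * φX x) (g := φP)
    (hintM.sub (hintX.const_mul (1/4))) hintP hΩ.measurableSet hpt
  have e4 : (∫ x in Ω, (φM x - 1/4 * φX x))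
      = (∫ x in Ω, φM x) - ∫ x in Ω, (1/4 * φX x) :=
    integral_sub hintM (hintX.const_mul (1/4))
  have e5 : (∫ x in Ω, (1/4 * φX x)) = 1/4 * ∫ x in Ω, φX x := by
    simpa [smul_eq_mul] using integral_smul (μ := volume.restrict Ω) ((1:ℝ)/4) φX
  rw [e4, e5] at hmono
  show 1/4 * (∫ x in Ω, φX x) + 1/2 * (∫ x in Ω, φF x) ≤ ∫ x in Ω, φP x
  linarith
end

section
/- Let 0 ≤ α < 1/2. Then the functional I_α is unbounded below on the constraint set 𝒢: for every M ∈ ℝ there exists a smooth function g on (−1,1) with ∫_{−1}^1 (1−x²)|g'(x)|² dx < ∞ and ∫_{−1}^1 e^{2g(x)} x dx = 0 such that I_α(g) := (α/2) ∫_{−1}^1 (1−x²)|g'(x)|² dx + ∫_{−1}^1 g(x) dx − ln( (1/2) ∫_{−1}^1 e^{2g(x)} dx ) < M. -/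
open MeasureTheory

private lemma onofri_ioo_eq (f : ℝ → ℝ) :
    (∫ x in Set.Ioo (-1:ℝ) 1, f x) = ∫ x in (-1:ℝ)..1, f x := by
  rw [intervalIntegral.integral_of_le (by norm_num), integral_Ioc_eq_integral_Ioo]

set_option maxHeartbeats 1000000 in
/-- **Unboundedness below of the constrained Moser–Onofri functional for `α < 1/2`.**
For `0 ≤ α < 1/2` and every `M ∈ ℝ`, there is a smooth `g` on `(-1,1)` with
`∫ (1-x²)|g'|² < ∞`, `∫ |g| < ∞`, `∫ e^{2g} < ∞` and `∫ e^{2g(x)} x dx = 0`, such that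
`I_α(g) = (α/2)∫ (1-x²)|g'|² + ∫ g - ln((1/2)∫ e^{2g}) < M`. -/
theorem onedim_onofri_unbounded_below (α : ℝ) (hα0 : 0 ≤ α) (hα : α < 1 / 2) (M : ℝ) :
    ∃ g : ℝ → ℝ, ContDiffOn ℝ (⊤ : ℕ∞) g (Set.Ioo (-1 : ℝ) 1) ∧
      IntegrableOn (fun x => (1 - x ^ 2) * (deriv g x) ^ 2) (Set.Ioo (-1 : ℝ) 1) ∧
      IntegrableOn g (Set.Ioo (-1 : ℝ) 1) ∧
      IntegrableOn (fun x => Real.exp (2 * g x)) (Set.Ioo (-1 : ℝ) 1) ∧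
      (∫ x in Set.Ioo (-1 : ℝ) 1, Real.exp (2 * g x) * x) = 0 ∧
      α / 2 * (∫ x in Set.Ioo (-1 : ℝ) 1, (1 - x ^ 2) * (deriv g x) ^ 2) +
          (∫ x in Set.Ioo (-1 : ℝ) 1, g x) -
          Real.log ((1 / 2) * ∫ x in Set.Ioo (-1 : ℝ) 1, Real.exp (2 * g x)) < M := by
  have h2α : 0 < 1 - 2*α := by linarith
  set c : ℝ := Real.log 3 + Real.log 72 + 7 with hc
  set δ : ℝ := min 1 (Real.exp ((M - c)/(1 - 2*α))) with hδdef
  have hδ0 : 0 < δ := lt_min one_pos (Real.exp_pos _)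
  have hδ1 : δ ≤ 1 := min_le_left _ _
  have hlogδ0 : Real.log δ ≤ 0 := Real.log_nonpos hδ0.le hδ1
  have hlogδ : (1 - 2*α) * Real.log δ ≤ M - c := by
    have h1 : Real.log δ ≤ (M - c)/(1 - 2*α) := by
      calc Real.log δ ≤ Real.log (Real.exp ((M - c)/(1-2*α))) :=
            Real.log_le_log hδ0 (min_le_right _ _)
        _ = (M - c)/(1 - 2*α) := Real.log_exp _
    calc (1-2*α) * Real.log δ ≤ (1-2*α) * ((M-c)/(1-2*α)) :=
          mul_le_mul_of_nonneg_left h1 h2α.le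
      _ = M - c := by field_simp
  clear_value δ
  set a : ℝ := 1 + δ with hadef
  have ha1 : 1 < a := by rw [hadef]; linarith
  have ha2 : a ≤ 2 := by rw [hadef]; linarith
  have haδ : a - 1 = δ := by rw [hadef]; ring
  clear hadef
  clear_value a
  set g : ℝ → ℝ := fun x => -Real.log (a^2 - x^2) with hgdef
  have hu : ∀ x ∈ Set.Icc (-1:ℝ) 1, 0 < a^2 - x^2 := by
    intro x hx; obtain ⟨h1, h2⟩ := hx; nlinarith
  have hsub : Set.Ioo (-1:ℝ) 1 ⊆ Set.Icc (-1:ℝ) 1 := Set.Ioo_subset_Icc_self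
  have huIcc : Set.uIcc (-1:ℝ) 1 = Set.Icc (-1:ℝ) 1 := Set.uIcc_of_le (by norm_num)
  -- positivity of a ± x on Icc
  have hpx : ∀ x ∈ Set.Icc (-1:ℝ) 1, 0 < a + x := by
    intro x hx; obtain ⟨h1, _⟩ := hx; linarith
  have hmx : ∀ x ∈ Set.Icc (-1:ℝ) 1, 0 < a - x := by
    intro x hx; obtain ⟨_, h2⟩ := hx; linarith
  -- smoothness
  have hcd : ContDiffOn ℝ (⊤ : ℕ∞) g (Set.Ioo (-1:ℝ) 1) := by
    simp only [hgdef]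
    refine ContDiffOn.neg (ContDiffOn.log ?_ ?_)
    · exact (contDiff_const.sub (contDiff_id.pow 2)).contDiffOn
    · intro x hx; exact (hu x (hsub hx)).ne'
  -- derivative
  have hderiv : ∀ x ∈ Set.Icc (-1:ℝ) 1, HasDerivAt g (2*x/(a^2 - x^2)) x := by
    intro x hx
    have h1 : HasDerivAt (fun y : ℝ => a^2 - y^2) (-(2*x)) x := by
      simpa using (hasDerivAt_pow 2 x).const_sub (a^2)
    have h2 := (h1.log (hu x hx).ne').neg
    refine h2.congr_deriv ?_
    field_simp
  have hderiv' : ∀ x ∈ Set.Icc (-1:ℝ) 1, deriv g x = 2*x/(a^2 - x^2) :=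
    fun x hx => (hderiv x hx).deriv
  -- exp formula
  have hexp : ∀ x ∈ Set.Icc (-1:ℝ) 1, Real.exp (2 * g x) = ((a^2 - x^2)^2)⁻¹ := by
    intro x hx
    have hu' := hu x hx
    have h1 : 2 * g x = Real.log (((a^2 - x^2)^2)⁻¹) := by
      rw [Real.log_inv, Real.log_pow]; simp only [hgdef]
      push_cast; ring
    rw [h1, Real.exp_log (by positivity)]
  -- continuity facts
  have hcont_u : ContinuousOn (fun x : ℝ => a^2 - x^2) (Set.Icc (-1:ℝ) 1) :=
    (continuous_const.sub (continuous_pow 2)).continuousOn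
  have hcont_g : ContinuousOn g (Set.Icc (-1:ℝ) 1) := by
    simp only [hgdef]
    exact (hcont_u.log (fun x hx => (hu x hx).ne')).neg
  have hint_g : IntegrableOn g (Set.Ioo (-1:ℝ) 1) :=
    (hcont_g.integrableOn_Icc).mono_set hsub
  have hcont_exp : ContinuousOn (fun x => Real.exp (2 * g x)) (Set.Icc (-1:ℝ) 1) :=
    Real.continuous_exp.comp_continuousOn (continuousOn_const.mul hcont_g)
  have hint_exp : IntegrableOn (fun x => Real.exp (2 * g x)) (Set.Ioo (-1:ℝ) 1) :=
    (hcont_exp.integrableOn_Icc).mono_set hsub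
  have hcont_inv2 : ContinuousOn (fun x : ℝ => ((a^2 - x^2)^2)⁻¹) (Set.Icc (-1:ℝ) 1) := by
    exact ((hcont_u.pow 2).inv₀ (fun x hx => pow_ne_zero 2 (hu x hx).ne'))
  have hint_inv2 : IntegrableOn (fun x : ℝ => ((a^2 - x^2)^2)⁻¹) (Set.Ioo (-1:ℝ) 1) :=
    (hcont_inv2.integrableOn_Icc).mono_set hsub
  have hcont_φ : ContinuousOn (fun x : ℝ => (1 - x^2) * (2*x/(a^2 - x^2))^2)
      (Set.Icc (-1:ℝ) 1) := by
    refine ContinuousOn.mul ?_ (ContinuousOn.pow ?_ 2)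
    · exact (continuous_const.sub (continuous_pow 2)).continuousOn
    · exact (continuous_const.mul continuous_id).continuousOn.div hcont_u
        (fun x hx => (hu x hx).ne')
  have hint_φ : IntegrableOn (fun x : ℝ => (1 - x^2) * (2*x/(a^2 - x^2))^2)
      (Set.Ioo (-1:ℝ) 1) := (hcont_φ.integrableOn_Icc).mono_set hsub
  have hint_dir : IntegrableOn (fun x => (1 - x ^ 2) * (deriv g x) ^ 2) (Set.Ioo (-1:ℝ) 1) :=
    hint_φ.congr_fun (fun x hx => by rw [hderiv' x (hsub hx)]) measurableSet_Ioo
  have hcont_ψ : ContinuousOn (fun x : ℝ => 4 * (a^2 - x^2)⁻¹) (Set.Icc (-1:ℝ) 1) :=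
    continuousOn_const.mul (hcont_u.inv₀ (fun x hx => (hu x hx).ne'))
  have hint_ψ : IntegrableOn (fun x : ℝ => 4 * (a^2 - x^2)⁻¹) (Set.Ioo (-1:ℝ) 1) :=
    (hcont_ψ.integrableOn_Icc).mono_set hsub
  -- odd integral vanishes (FTC)
  have hodd : (∫ x in Set.Ioo (-1:ℝ) 1, Real.exp (2 * g x) * x) = 0 := by
    have h1 : (∫ x in Set.Ioo (-1:ℝ) 1, Real.exp (2 * g x) * x)
        = ∫ x in Set.Ioo (-1:ℝ) 1, ((a^2 - x^2)^2)⁻¹ * x :=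
      setIntegral_congr_fun measurableSet_Ioo (fun x hx => by rw [hexp x (hsub hx)])
    rw [h1, onofri_ioo_eq]
    have hF : ∀ x ∈ Set.uIcc (-1:ℝ) 1,
        HasDerivAt (fun y => (2*(a^2 - y^2))⁻¹) (((a^2 - x^2)^2)⁻¹ * x) x := by
      intro x hx
      rw [huIcc] at hx
      have hu' := hu x hx
      have h1 : HasDerivAt (fun y : ℝ => a^2 - y^2) (-(2*x)) x := by
        simpa using (hasDerivAt_pow 2 x).const_sub (a^2)
      have h2 := (h1.const_mul 2).inv (by positivity)
      refine h2.congr_deriv ?_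
      field_simp
    have hInt : IntervalIntegrable (fun x => ((a^2 - x^2)^2)⁻¹ * x) volume (-1) 1 := by
      apply ContinuousOn.intervalIntegrable
      rw [huIcc]
      exact hcont_inv2.mul continuousOn_id
    rw [intervalIntegral.integral_eq_sub_of_hasDerivAt hF hInt]
    norm_num
  -- the Dirichlet integral bound
  have hLL0 : 0 ≤ Real.log (a+1) - Real.log δ := by
    have := Real.log_le_log hδ0 (by linarith : δ ≤ a + 1)
    linarith
  have hJ : (∫ x in (-1:ℝ)..1, 4 * (a^2 - x^2)⁻¹)
      = 4 * ((2*a)⁻¹ * ((Real.log (a+1) - Real.log (a-1))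
          - (Real.log (a-1) - Real.log (a+1)))) := by
    rw [intervalIntegral.integral_const_mul]
    congr 1
    have hH : ∀ x ∈ Set.uIcc (-1:ℝ) 1,
        HasDerivAt (fun y => (2*a)⁻¹ * (Real.log (a + y) - Real.log (a - y)))
          ((a^2 - x^2)⁻¹) x := by
      intro x hx
      rw [huIcc] at hx
      have hp : HasDerivAt (fun y : ℝ => a + y) 1 x := (hasDerivAt_id x).const_add a
      have hm : HasDerivAt (fun y : ℝ => a - y) (-1) x := by
        simpa using (hasDerivAt_id x).const_sub a
      have h2 := ((hp.log (hpx x hx).ne').sub (hm.log (hmx x hx).ne')).const_mul (2*a)⁻¹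
      refine h2.congr_deriv ?_
      have h3 := hpx x hx
      have h4 := hmx x hx
      have h5 : a^2 - x^2 = (a+x)*(a-x) := by ring
      rw [h5]
      field_simp
      ring
    have hInt : IntervalIntegrable (fun x : ℝ => (a^2 - x^2)⁻¹) volume (-1) 1 := by
      apply ContinuousOn.intervalIntegrable
      rw [huIcc]
      exact hcont_u.inv₀ (fun x hx => (hu x hx).ne')
    rw [intervalIntegral.integral_eq_sub_of_hasDerivAt hH hInt]
    ring
  have hA : (∫ x in Set.Ioo (-1:ℝ) 1, (1 - x ^ 2) * (deriv g x) ^ 2)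
      ≤ 4 * (Real.log (a+1) - Real.log δ) := by
    have e1 : (∫ x in Set.Ioo (-1:ℝ) 1, (1 - x ^ 2) * (deriv g x) ^ 2)
        = ∫ x in Set.Ioo (-1:ℝ) 1, (1 - x^2) * (2*x/(a^2 - x^2))^2 :=
      setIntegral_congr_fun measurableSet_Ioo (fun x hx => by rw [hderiv' x (hsub hx)])
    have e2 : (∫ x in Set.Ioo (-1:ℝ) 1, (1 - x^2) * (2*x/(a^2 - x^2))^2)
        ≤ ∫ x in Set.Ioo (-1:ℝ) 1, 4 * (a^2 - x^2)⁻¹ := by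
      refine setIntegral_mono_on hint_φ hint_ψ measurableSet_Ioo ?_
      intro x hx
      have hu' := hu x (hsub hx)
      obtain ⟨hx1, hx2⟩ := hx
      have h1 : (1 - x^2) * (2*x/(a^2 - x^2))^2 = (4*(x^2*(1-x^2))) / (a^2-x^2)^2 := by
        field_simp; ring
      have h2 : 4 * (a^2 - x^2)⁻¹ = (4*(a^2-x^2)) / (a^2-x^2)^2 := by
        field_simp
      rw [h1, h2, div_le_div_iff_of_pos_right (by positivity)]
      nlinarith [sq_nonneg x, sq_nonneg (1-x^2)]
    have e3 : (∫ x in Set.Ioo (-1:ℝ) 1, 4 * (a^2 - x^2)⁻¹)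
        ≤ 4 * (Real.log (a+1) - Real.log δ) := by
      rw [onofri_ioo_eq _, hJ, haδ]
      have hinva : (2*a)⁻¹ ≤ 2⁻¹ := by
        apply inv_anti₀ (by norm_num)
        linarith
      nlinarith [hLL0]
    calc _ = _ := e1
      _ ≤ _ := e2
      _ ≤ _ := e3
  -- ∫ g bound
  have hB : (∫ x in Set.Ioo (-1:ℝ) 1, g x) ≤ 6 := by
    rw [onofri_ioo_eq]
    have hG : ∀ x ∈ Set.uIcc (-1:ℝ) 1,
        HasDerivAt (fun y => -((a+y) * Real.log (a+y) - (a+y))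
            + ((a-y) * Real.log (a-y) - (a-y))) (g x) x := by
      intro x hx
      rw [huIcc] at hx
      have h3 := hpx x hx
      have h4 := hmx x hx
      have hp : HasDerivAt (fun y : ℝ => a + y) 1 x := (hasDerivAt_id x).const_add a
      have hm : HasDerivAt (fun y : ℝ => a - y) (-1) x := by
        simpa using (hasDerivAt_id x).const_sub a
      have h1 : HasDerivAt (fun y : ℝ => (a+y) * Real.log (a+y))
          (1 * Real.log (a+x) + (a+x) * (1/(a+x))) x := hp.mul (hp.log h3.ne')
      have h2 : HasDerivAt (fun y : ℝ => (a-y) * Real.log (a-y))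
          ((-1) * Real.log (a-x) + (a-x) * ((-1)/(a-x))) x := hm.mul (hm.log h4.ne')
      have h5 := ((h1.sub hp).neg).add (h2.sub hm)
      refine h5.congr_deriv ?_
      simp only [hgdef]
      have h6 : a^2 - x^2 = (a+x)*(a-x) := by ring
      rw [h6, Real.log_mul h3.ne' h4.ne']
      field_simp
      ring
    have hInt : IntervalIntegrable g volume (-1) 1 := by
      apply ContinuousOn.intervalIntegrable
      rw [huIcc]; exact hcont_g
    rw [intervalIntegral.integral_eq_sub_of_hasDerivAt hG hInt]
    have e1 : a + 1 - 1 = a := by ring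
    have e2 : a - -1 = a + 1 := by ring
    have e3 : a + -1 = a - 1 := by ring
    rw [e2, e3, haδ]
    have hl1 : 0 ≤ Real.log (a+1) := Real.log_nonneg (by linarith)
    have hl2 : δ * Real.log δ ≤ 0 := mul_nonpos_of_nonneg_of_nonpos hδ0.le hlogδ0
    have hl3 : 0 ≤ (a+1) * Real.log (a+1) := mul_nonneg (by linarith) hl1
    linarith
  -- lower bound for ∫ e^{2g}
  have hC : (36*δ)⁻¹ ≤ ∫ x in Set.Ioo (-1:ℝ) 1, Real.exp (2 * g x) := by
    have h1 : (∫ x in Set.Ioo (-1:ℝ) 1, Real.exp (2 * g x))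
        = ∫ x in Set.Ioo (-1:ℝ) 1, ((a^2 - x^2)^2)⁻¹ :=
      setIntegral_congr_fun measurableSet_Ioo (fun x hx => hexp x (hsub hx))
    rw [h1]
    have hsub2 : Set.Ioo (1-δ) 1 ⊆ Set.Ioo (-1:ℝ) 1 :=
      Set.Ioo_subset_Ioo (by linarith) le_rfl
    have step1 : (∫ x in Set.Ioo (1-δ) 1, ((a^2 - x^2)^2)⁻¹)
        ≤ ∫ x in Set.Ioo (-1:ℝ) 1, ((a^2 - x^2)^2)⁻¹ := by
      refine setIntegral_mono_set hint_inv2 ?_ (HasSubset.Subset.eventuallyLE hsub2)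
      filter_upwards with x
      positivity
    have step2 : (36*δ)⁻¹ ≤ ∫ x in Set.Ioo (1-δ) 1, ((a^2 - x^2)^2)⁻¹ := by
      have hptwise : ∀ x ∈ Set.Ioo (1-δ) 1, (36*δ^2)⁻¹ ≤ ((a^2 - x^2)^2)⁻¹ := by
        intro x hx
        obtain ⟨hx1, hx2⟩ := hx
        have hxIcc : x ∈ Set.Icc (-1:ℝ) 1 := ⟨by linarith, hx2.le⟩
        have hu' := hu x hxIcc
        apply inv_anti₀ (by positivity)
        have e1 : 0 < a - x := by linarith
        have e3 : 0 < a + x := by linarith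
        have e2 : a - x ≤ 2*δ := by linarith
        have e4 : a + x ≤ 3 := by linarith
        have e5 : (a-x)*(a+x) ≤ 2*δ*3 := mul_le_mul e2 e4 e3.le (by positivity)
        have e6 : a^2 - x^2 ≤ 6*δ := by nlinarith
        nlinarith
      have hmono : (∫ x in Set.Ioo (1-δ) 1, (36*δ^2)⁻¹)
          ≤ ∫ x in Set.Ioo (1-δ) 1, ((a^2 - x^2)^2)⁻¹ :=
        setIntegral_mono_on (integrableOn_const (by
          rw [Real.volume_Ioo]; exact ENNReal.ofReal_ne_top))
          (hint_inv2.mono_set hsub2) measurableSet_Ioo hptwise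
      have hconst : (∫ x in Set.Ioo (1-δ) 1, ((36*δ^2)⁻¹ : ℝ)) = (36*δ)⁻¹ := by
        rw [setIntegral_const, measureReal_def, Real.volume_Ioo, smul_eq_mul]
        rw [show (1 : ℝ) - (1 - δ) = δ by ring, ENNReal.toReal_ofReal hδ0.le]
        field_simp
      linarith
    linarith
  have hCpos : 0 < ∫ x in Set.Ioo (-1:ℝ) 1, Real.exp (2 * g x) :=
    lt_of_lt_of_le (by positivity) hC
  -- log lower bound
  have hlogC : -(Real.log 72 + Real.log δ)
      ≤ Real.log ((1/2) * ∫ x in Set.Ioo (-1:ℝ) 1, Real.exp (2 * g x)) := by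
    have h1 : ((72:ℝ)*δ)⁻¹ ≤ (1/2) * ∫ x in Set.Ioo (-1:ℝ) 1, Real.exp (2 * g x) := by
      have : ((72:ℝ)*δ)⁻¹ = (1/2) * (36*δ)⁻¹ := by
        field_simp; ring
      rw [this]
      linarith
    have h2 := Real.log_le_log (by positivity) h1
    rwa [Real.log_inv, Real.log_mul (by norm_num) hδ0.ne'] at h2
  refine ⟨g, hcd, hint_dir, hint_g, hint_exp, hodd, ?_⟩
  -- final assembly
  have hAα : α / 2 * (∫ x in Set.Ioo (-1:ℝ) 1, (1 - x ^ 2) * (deriv g x) ^ 2)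
      ≤ 2 * α * (Real.log 3 - Real.log δ) := by
    have h1 : α / 2 * (∫ x in Set.Ioo (-1:ℝ) 1, (1 - x ^ 2) * (deriv g x) ^ 2)
        ≤ α / 2 * (4 * (Real.log (a+1) - Real.log δ)) :=
      mul_le_mul_of_nonneg_left hA (by linarith)
    have h2 : Real.log (a+1) ≤ Real.log 3 := Real.log_le_log (by linarith) (by linarith)
    nlinarith
  have hlog3 : 0 ≤ Real.log 3 := Real.log_nonneg (by norm_num)
  have h2αlog3 : 2 * α * Real.log 3 ≤ Real.log 3 := by
    nlinarith [mul_nonneg h2α.le hlog3]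
  have hfin : 2 * α * (Real.log 3 - Real.log δ) + 6 + (Real.log 72 + Real.log δ) < M := by
    have : 2*α*(Real.log 3 - Real.log δ) + Real.log δ
        = 2*α*Real.log 3 + (1-2*α)*Real.log δ := by ring
    nlinarith [hlogδ]
  linarith
end
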